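/- Let α, β be ordinals with α countable and β > α·2. Then Adam has a winning strategy in DG^β_{2^ω,α}(𝕀, ℝ), where 𝕀 = ℝ \ ℚ and ℝ carry their usual linear orders (viewed as disjoint structures). -/

import Mathlib

open Cardinal Set

universe u

namespace DGRel

/- The similarity game `DG^β_{θ,α}` of Väänänen–Veličković, specialised to structures
`(M₀, R₀)`, `(M₁, R₁)` with a single binary relation (this covers in particular linear
orders, with `R = (<)`). -/

variable {M N : Type u} (R0 : M → M → Prop) (R1 : N → N → Prop)

/-- A partial isomorphism between `(M, R0)` and `(N, R1)`, given as the graph of a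
partial map: functional, injective, and preserving the relation in both directions. -/
def IsPartialIso (g : Set (M × N)) : Prop :=
  (∀ ⦃a : M⦄ ⦃b b' : N⦄, (a, b) ∈ g → (a, b') ∈ g → b = b') ∧
  (∀ ⦃a a' : M⦄ ⦃b : N⦄, (a, b) ∈ g → (a', b) ∈ g → a = a') ∧
  (∀ ⦃a a' : M⦄ ⦃b b' : N⦄, (a, b) ∈ g → (a', b') ∈ g → (R0 a a' ↔ R1 b b'))

/-- A `(θ, α)`-position in the similarity game on `(M, N)`:  a clock ordinal `ht`, sets
`A0 ⊆ M`, `A1 ⊆ N` of cardinality `≤ θ`, a partial isomorphism `g` between them, and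
height functions `h0`, `h1` taking values `< α` on `A0`, `A1`, such that every element of
height `0` is matched by `g`. -/
structure Position (R0 : M → M → Prop) (R1 : N → N → Prop)
    (θ : Cardinal.{u}) (α : Ordinal.{u}) : Type (u + 1) where
  ht : Ordinal.{u}
  A0 : Set M
  A1 : Set N
  A0_card : #A0 ≤ θ
  A1_card : #A1 ≤ θ
  g : Set (M × N)
  g_iso : IsPartialIso R0 R1 g
  g_sub : g ⊆ A0 ×ˢ A1
  h0 : M → Ordinal.{u}
  h1 : N → Ordinal.{u}
  h0_lt : ∀ a ∈ A0, h0 a < α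
  h1_lt : ∀ b ∈ A1, h1 b < α
  h0_zero : ∀ a ∈ A0, h0 a = 0 → ∃ b, (a, b) ∈ g
  h1_zero : ∀ b ∈ A1, h1 b = 0 → ∃ a, (a, b) ∈ g

variable {θ : Cardinal.{u}} {α : Ordinal.{u}}

/-- `q` extends `p` (written `q < p` in the paper): the clock strictly decreases, the sets
grow, the partial isomorphism of `q` restricted to the old sets is that of `p`, and every
height strictly decreases unless it is already `0`. -/
def Extends (q p : Position R0 R1 θ α) : Prop :=
  q.ht < p.ht ∧ p.A0 ⊆ q.A0 ∧ p.A1 ⊆ q.A1 ∧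
  p.g ⊆ q.g ∧ (∀ a b, (a, b) ∈ q.g → a ∈ p.A0 → (a, b) ∈ p.g) ∧
  (∀ a ∈ p.A0, q.h0 a ≤ p.h0 a ∧ (p.h0 a ≠ 0 → q.h0 a < p.h0 a)) ∧
  (∀ b ∈ p.A1, q.h1 b ≤ p.h1 b ∧ (p.h1 b ≠ 0 → q.h1 b < p.h1 b))

/-- The starting position `(β, ∅, ∅, ∅, ∅)`. -/
def startPos (β : Ordinal.{u}) : Position R0 R1 θ α where
  ht := β
  A0 := ∅
  A1 := ∅
  A0_card := by simp
  A1_card := by simp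
  g := ∅
  g_iso := by refine ⟨?_, ?_, ?_⟩ <;> intros <;> simp_all
  g_sub := by simp
  h0 := fun _ => 0
  h1 := fun _ => 0
  h0_lt := by simp
  h1_lt := by simp
  h0_zero := by simp
  h1_zero := by simp

/-- Eve has a winning strategy in the similarity game from position `p`:  whatever clock
ordinal `β' < ht p` and sets `B0`, `B1` of size `≤ θ` Adam demands, Eve can move to an
extending position covering them from which she again has a winning strategy.  (Since the
clock strictly decreases, the game is finite, and this well-founded recursion captures
exactly the existence of a winning strategy for Eve.) -/
noncomputable def EveWinsFrom (p : Position R0 R1 θ α) : Prop :=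
  WellFounded.fix (C := fun _ : Ordinal.{u} => Position R0 R1 θ α → Prop) Ordinal.lt_wf
    (fun o IH p =>
      ∀ β' (hβ : β' < o) (B0 : Set M) (B1 : Set N), #B0 ≤ θ → #B1 ≤ θ →
        ∃ q : Position R0 R1 θ α, Extends R0 R1 q p ∧ q.ht = β' ∧
          B0 ⊆ q.A0 ∧ B1 ⊆ q.A1 ∧ IH β' hβ q)
    p.ht p

/-- Eve has a winning strategy in the game `DG^β_{θ,α}((M,R0), (N,R1))`. -/
noncomputable def EveWinsGame (β : Ordinal.{u}) (θ : Cardinal.{u}) (α : Ordinal.{u}) : Prop :=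
  EveWinsFrom R0 R1 (startPos R0 R1 (θ := θ) (α := α) β)

/-- Adam has a winning strategy from position `p`: he can demand a clock ordinal
`β' < ht p` and sets `B0`, `B1` of size `≤ θ` such that every legal reply of Eve leads to
a position from which Adam again has a winning strategy (in particular, if Eve has no
legal reply, she loses). -/
inductive AdamWinsFrom : Position R0 R1 θ α → Prop where
  | step (p : Position R0 R1 θ α) (β' : Ordinal.{u}) (hβ : β' < p.ht)
      (B0 : Set M) (B1 : Set N) (hB0 : #B0 ≤ θ) (hB1 : #B1 ≤ θ)
      (h : ∀ q : Position R0 R1 θ α, Extends R0 R1 q p → q.ht = β' →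
        B0 ⊆ q.A0 → B1 ⊆ q.A1 → AdamWinsFrom q) :
      AdamWinsFrom p

/-- Adam has a winning strategy in the game `DG^β_{θ,α}((M,R0), (N,R1))`. -/
def AdamWinsGame (β : Ordinal.{u}) (θ : Cardinal.{u}) (α : Ordinal.{u}) : Prop :=
  AdamWinsFrom R0 R1 (startPos R0 R1 (θ := θ) (α := α) β)

/-- A position of the infinite game `DG_{θ,α}` (no clock ordinal). -/
structure IPosition (R0 : M → M → Prop) (R1 : N → N → Prop)
    (θ : Cardinal.{u}) (α : Ordinal.{u}) : Type (u + 1) where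
  A0 : Set M
  A1 : Set N
  A0_card : #A0 ≤ θ
  A1_card : #A1 ≤ θ
  g : Set (M × N)
  g_iso : IsPartialIso R0 R1 g
  g_sub : g ⊆ A0 ×ˢ A1
  h0 : M → Ordinal.{u}
  h1 : N → Ordinal.{u}
  h0_lt : ∀ a ∈ A0, h0 a < α
  h1_lt : ∀ b ∈ A1, h1 b < α
  h0_zero : ∀ a ∈ A0, h0 a = 0 → ∃ b, (a, b) ∈ g
  h1_zero : ∀ b ∈ A1, h1 b = 0 → ∃ a, (a, b) ∈ g

/-- Extension of positions in the infinite game. -/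
def IExtends (q p : IPosition R0 R1 θ α) : Prop :=
  p.A0 ⊆ q.A0 ∧ p.A1 ⊆ q.A1 ∧
  p.g ⊆ q.g ∧ (∀ a b, (a, b) ∈ q.g → a ∈ p.A0 → (a, b) ∈ p.g) ∧
  (∀ a ∈ p.A0, q.h0 a ≤ p.h0 a ∧ (p.h0 a ≠ 0 → q.h0 a < p.h0 a)) ∧
  (∀ b ∈ p.A1, q.h1 b ≤ p.h1 b ∧ (p.h1 b ≠ 0 → q.h1 b < p.h1 b))

/-- The empty starting position of the infinite game. -/
def startIPos : IPosition R0 R1 θ α where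
  A0 := ∅
  A1 := ∅
  A0_card := by simp
  A1_card := by simp
  g := ∅
  g_iso := by refine ⟨?_, ?_, ?_⟩ <;> intros <;> simp_all
  g_sub := by simp
  h0 := fun _ => 0
  h1 := fun _ => 0
  h0_lt := by simp
  h1_lt := by simp
  h0_zero := by simp
  h1_zero := by simp

/-- Eve has a winning strategy in the infinite game `DG_{θ,α}` of length `ω`.  Since this
game is closed for Eve, having a winning strategy is equivalent to having a positional
one, i.e. a set `K` of positions containing the starting position such that Eve can
answer any challenge of Adam while staying inside `K`. -/
def EveWinsInfGame (θ : Cardinal.{u}) (α : Ordinal.{u}) : Prop :=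
  ∃ K : Set (IPosition R0 R1 θ α), startIPos R0 R1 ∈ K ∧
    ∀ p ∈ K, ∀ (B0 : Set M) (B1 : Set N), #B0 ≤ θ → #B1 ≤ θ →
      ∃ q ∈ K, IExtends R0 R1 q p ∧ B0 ⊆ q.A0 ∧ B1 ⊆ q.A1

end DGRel

/-!
Adam first demands all of `𝕀` and `ℝ`, with clock `α·2`. The irrationals are non-meagre and
there are only countably many heights below `α`, so some level set of irrationals is
non-meagre; spending the clock `α + γ` at height `γ`, Adam keeps lowering a non-meagre level
set until it consists of matched points. A non-meagre set of irrationals is dense in an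
interval `(u, v)`; for a rational `q ∈ (u, v)` the supremum `s` of the images of its points
below `q` would have to be the image of `q` itself, so `s` can never be matched, and Adam
wins by running the remaining clock `≥ α` down on the height of `s`.
-/

local notation "𝕀" => {x : ℝ // Irrational x}

theorem Ordinal.countable_Iio_of_card_le_aleph0 {o : Ordinal.{u}} (h : o.card ≤ ℵ₀) :
    (Iio o).Countable := by
  rw [← countable_coe_iff, ← mk_le_aleph0_iff, Cardinal.mk_Iio_ordinal]
  exact lift_le_aleph0.2 h

theorem not_isMeagre_setOf_irrational : ¬IsMeagre {x : ℝ | Irrational x} := by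
  intro h
  have hempty : (∅ : Set ℝ) ∈ residual ℝ := by
    simpa using Filter.inter_mem h eventually_residual_irrational
  exact not_isMeagre_of_isOpen isOpen_univ univ_nonempty (by simpa [IsMeagre] using hempty)

theorem exists_Ioo_subset_closure_of_not_isMeagre {X : Type*} [TopologicalSpace X]
    [LinearOrder X] [OrderTopology X] [NoMaxOrder X] [NoMinOrder X] {s : Set X}
    (hs : ¬IsMeagre s) : ∃ u v, u < v ∧ Ioo u v ⊆ closure s := by
  obtain ⟨x, hx⟩ : (interior (closure s)).Nonempty :=
    nonempty_iff_ne_empty.2 fun h => hs (IsNowhereDense.isMeagre h)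
  obtain ⟨u, v, ⟨hux, hxv⟩, huv⟩ :=
    mem_nhds_iff_exists_Ioo_subset.1 (isOpen_interior.mem_nhds hx)
  exact ⟨u, v, hux.trans hxv, huv.trans interior_subset⟩

theorem exists_not_isMeagre_image_fiber {X ι κ : Type*} [TopologicalSpace X] {e : ι → X}
    {f : ι → κ} {S : Set ι} {I : Set κ} (hI : I.Countable) (hf : MapsTo f S I)
    (hS : ¬IsMeagre (e '' S)) : ∃ i ∈ I, ¬IsMeagre (e '' {a ∈ S | f a = i}) := by
  refine exists_of_not_isMeagre_biUnion hI fun h => hS (h.mono ?_)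
  rintro _ ⟨a, ha, rfl⟩
  exact mem_biUnion (hf ha) ⟨a, ⟨ha, rfl⟩, rfl⟩

theorem exists_mem_Ioo_of_Ioo_subset_closure {X : Type*} [TopologicalSpace X] [LinearOrder X]
    [OrderTopology X] [DenselyOrdered X] {T : Set X} {u v : X} (hT : Ioo u v ⊆ closure T)
    {a b : X} (hua : u ≤ a) (hab : a < b) (hbv : b ≤ v) : ∃ t ∈ T, t ∈ Ioo a b := by
  obtain ⟨c, hc⟩ := exists_between hab
  obtain ⟨t, htab, htT⟩ :=
    mem_closure_iff.1 (hT (Ioo_subset_Ioo hua hbv hc)) _ isOpen_Ioo hc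
  exact ⟨t, htT, htab⟩

namespace DGRel

section PartialIso

variable {M N : Type u} [LinearOrder M] [ConditionallyCompleteLinearOrder N]
  {g : Set (M × N)} (hg : IsPartialIso (· < ·) (· < ·) g) {L : Set M} {m : M → N}
  (hm : ∀ a ∈ L, (a, m a) ∈ g) {x : M} (hx : (x, sSup (m '' L)) ∈ g)
include hg hm hx

theorem IsPartialIso.lt_of_mem_sSup_image (hL : ∀ a ∈ L, ∃ a' ∈ L, a < a')
    {n : M} {b : N} (hn : n ∈ upperBounds L) (hnb : (n, b) ∈ g) : ∀ a ∈ L, a < x := by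
  have hbdd : BddAbove (m '' L) := ⟨b, forall_mem_image.2 fun a ha =>
    not_lt.1 fun hlt => not_lt.2 (hn ha) ((hg.2.2 hnb (hm a ha)).2 hlt)⟩
  intro a ha
  obtain ⟨a', ha', haa'⟩ := hL a ha
  refine (hg.2.2 (hm a ha) hx).2 ?_
  exact ((hg.2.2 (hm a ha) (hm a' ha')).1 haa').trans_le (le_csSup hbdd (mem_image_of_mem m ha'))

theorem IsPartialIso.le_of_mem_sSup_image (hne : L.Nonempty) {n : M} {b : N}
    (hn : n ∈ upperBounds L) (hnb : (n, b) ∈ g) : x ≤ n := by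
  refine not_lt.1 fun hnx => ?_
  obtain ⟨_, ⟨a, ha, rfl⟩, hba⟩ :=
    exists_lt_of_lt_csSup (hne.image m) ((hg.2.2 hnb hx).1 hnx)
  exact not_lt.2 (hn ha) ((hg.2.2 hnb (hm a ha)).2 hba)

end PartialIso

section Game

variable {M N : Type u} {R0 : M → M → Prop} {R1 : N → N → Prop} {θ : Cardinal.{u}}
  {α : Ordinal.{u}} {p q : Position R0 R1 θ α}

theorem Extends.A0_subset (h : Extends R0 R1 q p) : p.A0 ⊆ q.A0 := h.2.1

theorem Extends.A1_subset (h : Extends R0 R1 q p) : p.A1 ⊆ q.A1 := h.2.2.1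

theorem Extends.g_subset (h : Extends R0 R1 q p) : p.g ⊆ q.g := h.2.2.2.1

theorem Extends.h0_lt (h : Extends R0 R1 q p) {a : M} (ha : a ∈ p.A0) (h0 : p.h0 a ≠ 0) :
    q.h0 a < p.h0 a :=
  (h.2.2.2.2.2.1 a ha).2 h0

theorem Extends.h1_lt (h : Extends R0 R1 q p) {b : N} (hb : b ∈ p.A1) (h0 : p.h1 b ≠ 0) :
    q.h1 b < p.h1 b :=
  (h.2.2.2.2.2.2 b hb).2 h0

/-- Adam wins if he can keep `b` unmatched forever: he spends the clock on the height of `b`,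
which must eventually reach `0`. -/
theorem adamWinsFrom_of_forall_unmatched (P : Position R0 R1 θ α → Prop) (b : N)
    (hP : ∀ ⦃p q⦄, P p → Extends R0 R1 q p → P q)
    (hb : ∀ ⦃p⦄, P p → b ∈ p.A1 ∧ ∀ a, (a, b) ∉ p.g) (p : Position R0 R1 θ α) (hp : P p)
    (hlt : p.h1 b < p.ht) : AdamWinsFrom R0 R1 p := by
  induction hδ : p.h1 b using WellFoundedLT.induction generalizing p with
  | _ δ ih =>
  obtain ⟨hbA, hbg⟩ := hb hp
  have hδ0 : p.h1 b ≠ 0 := fun h0 => (p.h1_zero b hbA h0).elim hbg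
  refine .step p δ (hδ ▸ hlt) ∅ ∅ (by simp) (by simp) fun q hqp hq _ _ => ?_
  have hqδ : q.h1 b < δ := hδ ▸ hqp.h1_lt hbA hδ0
  exact ih _ hqδ q (hP hp hqp) (hq ▸ hqδ) rfl

end Game

/-- A partner of the supremum would have to sit exactly at the cut `q` of `S`, which is
rational. -/
theorem IsPartialIso.sSup_image_unmatched {g : Set (𝕀 × ℝ)}
    (hg : IsPartialIso (· < ·) (· < ·) g) {S : Set 𝕀} {m : 𝕀 → ℝ} (hm : ∀ a ∈ S, (a, m a) ∈ g)
    {u v : ℝ} (hS : Ioo u v ⊆ closure (Subtype.val '' S)) {q : ℚ} (huq : u < q) (hqv : q < v)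
    (x : 𝕀) : (x, sSup (m '' {a ∈ S | (a : ℝ) ∈ Ioo u q})) ∉ g := by
  intro hx
  set L := {a ∈ S | (a : ℝ) ∈ Ioo u q}
  have hmL : ∀ a ∈ L, (a, m a) ∈ g := fun a ha => hm a ha.1
  have upper : ∀ n ∈ S, (q : ℝ) < n → n ∈ upperBounds L := fun n _ hqn a ha =>
    Subtype.coe_le_coe.1 (ha.2.2.trans hqn).le
  obtain ⟨_, ⟨a₀, ha₀, rfl⟩, hua₀, ha₀q⟩ :=
    exists_mem_Ioo_of_Ioo_subset_closure hS le_rfl huq hqv.le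
  obtain ⟨_, ⟨n, hn, rfl⟩, hqn, -⟩ := exists_mem_Ioo_of_Ioo_subset_closure hS huq.le hqv le_rfl
  have hLx : ∀ a ∈ L, a < x := by
    refine hg.lt_of_mem_sSup_image hmL hx (fun a ha => ?_) (upper n hn hqn) (hm n hn)
    obtain ⟨_, ⟨a', ha', rfl⟩, haa', ha'q⟩ :=
      exists_mem_Ioo_of_Ioo_subset_closure hS ha.2.1.le ha.2.2 hqv.le
    exact ⟨a', ⟨ha', ha.2.1.trans haa', ha'q⟩, haa'⟩
  have hqx : (q : ℝ) ≤ x := by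
    refine not_lt.1 fun hxq => ?_
    have hux : u < x := hua₀.trans (hLx a₀ ⟨ha₀, hua₀, ha₀q⟩)
    obtain ⟨_, ⟨a, ha, rfl⟩, hxa, haq⟩ :=
      exists_mem_Ioo_of_Ioo_subset_closure hS hux.le hxq hqv.le
    exact (hLx a ⟨ha, hux.trans hxa, haq⟩).not_gt hxa
  have hxq : (x : ℝ) ≤ q := by
    refine not_lt.1 fun hqx => ?_
    obtain ⟨_, ⟨n', hn', rfl⟩, hqn', hn'x⟩ :=
      exists_mem_Ioo_of_Ioo_subset_closure hS huq.le (lt_min hqx hqv) (min_le_right _ _)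
    have := hg.le_of_mem_sSup_image hmL hx ⟨a₀, ha₀, hua₀, ha₀q⟩ (upper n' hn' hqn') (hm n' hn')
    exact (Subtype.coe_le_coe.2 this).not_gt (hn'x.trans_le (min_le_left _ _))
  exact x.2.ne_rat q (le_antisymm hxq hqx)

section IrrationalsVsReals

variable {θ : Cardinal.{0}} {α : Ordinal.{0}}

local notation "IrrRealPosition" => Position ((· < ·) : 𝕀 → 𝕀 → Prop) ((· < ·) : ℝ → ℝ → Prop)

theorem adamWinsFrom_of_matched_of_not_isMeagre (p : IrrRealPosition θ α) {S : Set 𝕀}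
    (hS : ¬IsMeagre (Subtype.val '' S)) (hmatched : ∀ a ∈ S, ∃ b, (a, b) ∈ p.g)
    (hA1 : ∀ b, b ∈ p.A1) (hα : α ≤ p.ht) : AdamWinsFrom (· < ·) (· < ·) p := by
  choose! m hm using hmatched
  obtain ⟨u, v, huv, hdense⟩ := exists_Ioo_subset_closure_of_not_isMeagre hS
  obtain ⟨q, huq, hqv⟩ := exists_rat_btwn huv
  set s := sSup (m '' {a ∈ S | (a : ℝ) ∈ Ioo u q})
  refine adamWinsFrom_of_forall_unmatched (fun p' => s ∈ p'.A1 ∧ ∀ a ∈ S, (a, m a) ∈ p'.g) s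
    (fun p' q' hp' hq' => ⟨hq'.A1_subset hp'.1, fun a ha => hq'.g_subset (hp'.2 a ha)⟩)
    (fun p' hp' => ⟨hp'.1, p'.g_iso.sSup_image_unmatched hp'.2 hdense huq hqv⟩)
    p ⟨hA1 s, hm⟩ ((p.h1_lt s (hA1 s)).trans_le hα)

/-- Every round Adam spends `α + γ'` on the clock, where `γ' < γ` is the height of a
non-meagre level set of `S`; at height `0` the level set is matched. -/
theorem adamWinsFrom_of_not_isMeagre_of_h0_lt (hα : α.card ≤ ℵ₀) (γ : Ordinal.{0})
    (p : IrrRealPosition θ α) {S : Set 𝕀} (hS : ¬IsMeagre (Subtype.val '' S))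
    (hSA0 : S ⊆ p.A0) (hSγ : ∀ a ∈ S, p.h0 a < γ) (hA1 : ∀ b, b ∈ p.A1)
    (hγ : α + γ ≤ p.ht) : AdamWinsFrom (· < ·) (· < ·) p := by
  induction γ using WellFoundedLT.induction generalizing p S with
  | _ γ ih =>
  obtain ⟨γ', -, hS'⟩ := exists_not_isMeagre_image_fiber
    (Ordinal.countable_Iio_of_card_le_aleph0 hα) (fun a ha => p.h0_lt a (hSA0 ha)) hS
  obtain ⟨_, ⟨a, ha, rfl⟩⟩ := nonempty_of_not_isMeagre hS'
  have hγ'γ : γ' < γ := ha.2 ▸ hSγ a ha.1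
  by_cases hγ'0 : γ' = 0
  · exact adamWinsFrom_of_matched_of_not_isMeagre p hS'
      (fun a ha => p.h0_zero a (hSA0 ha.1) (ha.2.trans hγ'0)) hA1 (le_self_add.trans hγ)
  refine .step p (α + γ') (((add_lt_add_iff_left α).2 hγ'γ).trans_le hγ) ∅ ∅ (by simp) (by simp)
    fun q hqp hq _ _ => ih γ' hγ'γ q hS' (fun a ha => hqp.A0_subset (hSA0 ha.1)) ?_
      (fun b => hqp.A1_subset (hA1 b)) hq.ge
  exact fun a ha => (hqp.h0_lt (hSA0 ha.1) (ha.2.trans_ne hγ'0)).trans_eq ha.2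

end IrrationalsVsReals

end DGRel

open DGRel in
/-- Let `α`, `β` be ordinals with `α` countable and `β > α·2`.  Then
Adam has a winning strategy in `DG^β_{2^ω,α}(𝕀, ℝ)`, where `𝕀 = ℝ \ ℚ` is the linear
order of the irrationals. -/
theorem adam_wins_irrationals_vs_reals (α β : Ordinal.{0})
    (hα : α.card ≤ Cardinal.aleph0) (hβ : α * 2 < β) :
    AdamWinsGame ((· < ·) : {x : ℝ // Irrational x} → {x : ℝ // Irrational x} → Prop)
      ((· < ·) : ℝ → ℝ → Prop) β Cardinal.continuum α := by
  refine .step _ (α * 2) hβ univ univ ?_ (by rw [mk_univ, mk_real]) fun p _ hp hA0 hA1 => ?_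
  · exact mk_univ.trans_le (mk_real ▸ mk_subtype_le _)
  refine adamWinsFrom_of_not_isMeagre_of_h0_lt hα α p (S := univ) ?_ hA0
    (fun a _ => p.h0_lt a (hA0 trivial)) (fun b => hA1 trivial) (by rw [hp, Ordinal.mul_two])
  simpa [Subtype.range_coe_subtype] using not_isMeagre_setOf_irrational
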